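/- arXiv:2002.00306 — 9 statements merged into one kernel-verified Lean document; each statement's English description precedes it below -/
import Mathlib

section
/- Let α be a nonempty finite set and let p_b, p_g : α → ℝ be strictly positive functions. Then for every function D : α → (0,1), Σ_{x∈α} [ p_b(x)·log D(x) + p_g(x)·log(1 − D(x)) ] ≤ Σ_{x∈α} [ p_b(x)·log( p_b(x)/(p_b(x)+p_g(x)) ) + p_g(x)·log( p_g(x)/(p_b(x)+p_g(x)) ) ], with equality if and only if D(x) = p_b(x)/(p_b(x)+p_g(x)) for all x ∈ α. -/
/-!
Pointwise in `x`, `t ↦ a log t + b log (1 - t)` is maximised on `(0, 1)` exactly at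
`t = a / (a + b)`: substituting `t = a u / (a + b)` and `1 - t = b v / (a + b)` turns the gap to
the optimum into `a log u + b log v` with `a u + b v = a + b`, and `log y ≤ y - 1` (strict for
`y ≠ 1`) makes this negative unless `u = 1`. Summing over `x` gives the inequality, and equality
of the sums forces equality in every term.
-/

open Real

lemma mul_log_add_mul_log_neg {a b u v : ℝ} (ha : 0 < a) (hb : 0 ≤ b) (hu : 0 < u) (hv : 0 < v)
    (hu1 : u ≠ 1) (huv : a * u + b * v = a + b) : a * log u + b * log v < 0 := by
  have hlu : a * log u < a * (u - 1) := mul_lt_mul_of_pos_left (log_lt_sub_one_of_pos hu hu1) ha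
  have hlv : b * log v ≤ b * (v - 1) := mul_le_mul_of_nonneg_left (log_le_sub_one_of_pos hv) hb
  linarith

lemma mul_log_add_mul_log_one_sub_lt {a b t : ℝ} (ha : 0 < a) (hb : 0 < b) (ht : t ∈ Set.Ioo 0 1)
    (hne : t ≠ a / (a + b)) :
    a * log t + b * log (1 - t) < a * log (a / (a + b)) + b * log (b / (a + b)) := by
  obtain ⟨ht0, ht1⟩ := ht
  have hab : 0 < a + b := add_pos ha hb
  have ht1' : 0 < 1 - t := sub_pos.mpr ht1
  have hgap : a * log t + b * log (1 - t) - (a * log (a / (a + b)) + b * log (b / (a + b))) =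
      a * log (t * (a + b) / a) + b * log ((1 - t) * (a + b) / b) := by
    rw [log_div (by positivity) ha.ne', log_div (by positivity) hb.ne', log_div ha.ne' hab.ne',
      log_div hb.ne' hab.ne', log_mul ht0.ne' hab.ne', log_mul ht1'.ne' hab.ne']
    ring
  have hu1 : t * (a + b) / a ≠ 1 := by
    rwa [Ne, div_eq_one_iff_eq ha.ne', ← eq_div_iff hab.ne']
  have hsum : a * (t * (a + b) / a) + b * ((1 - t) * (a + b) / b) = a + b := by
    field_simp
    ring
  have := mul_log_add_mul_log_neg ha hb.le (by positivity) (by positivity) hu1 hsum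
  linarith

lemma mul_log_add_mul_log_one_sub_at_optimum {a b : ℝ} (hab : 0 < a + b) :
    a * log (a / (a + b)) + b * log (1 - a / (a + b)) =
      a * log (a / (a + b)) + b * log (b / (a + b)) := by
  rw [one_sub_div hab.ne', add_sub_cancel_left]

lemma mul_log_add_mul_log_one_sub_le {a b t : ℝ} (ha : 0 < a) (hb : 0 < b) (ht : t ∈ Set.Ioo 0 1) :
    a * log t + b * log (1 - t) ≤ a * log (a / (a + b)) + b * log (b / (a + b)) := by
  rcases eq_or_ne t (a / (a + b)) with rfl | hne
  · exact (mul_log_add_mul_log_one_sub_at_optimum (add_pos ha hb)).le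
  · exact (mul_log_add_mul_log_one_sub_lt ha hb ht hne).le

lemma mul_log_add_mul_log_one_sub_eq_iff {a b t : ℝ} (ha : 0 < a) (hb : 0 < b)
    (ht : t ∈ Set.Ioo 0 1) :
    a * log t + b * log (1 - t) = a * log (a / (a + b)) + b * log (b / (a + b)) ↔
      t = a / (a + b) := by
  refine ⟨fun heq => ?_, ?_⟩
  · by_contra hne
    exact (mul_log_add_mul_log_one_sub_lt ha hb ht hne).ne heq
  · rintro rfl
    exact mul_log_add_mul_log_one_sub_at_optimum (add_pos ha hb)

theorem bgan_optimal_discriminator_finite_general {α : Type*} [Fintype α]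
    (pb pg : α → ℝ) (hpb : ∀ x, 0 < pb x) (hpg : ∀ x, 0 < pg x)
    (D : α → ℝ) (hD : ∀ x, D x ∈ Set.Ioo (0 : ℝ) 1) :
    (∑ x, (pb x * Real.log (D x) + pg x * Real.log (1 - D x))) ≤
      (∑ x, (pb x * Real.log (pb x / (pb x + pg x)) +
        pg x * Real.log (pg x / (pb x + pg x)))) ∧
    ((∑ x, (pb x * Real.log (D x) + pg x * Real.log (1 - D x))) =
      (∑ x, (pb x * Real.log (pb x / (pb x + pg x)) +
        pg x * Real.log (pg x / (pb x + pg x)))) ↔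
      ∀ x, D x = pb x / (pb x + pg x)) := by
  have hle : ∀ x ∈ Finset.univ, pb x * log (D x) + pg x * log (1 - D x) ≤
      pb x * log (pb x / (pb x + pg x)) + pg x * log (pg x / (pb x + pg x)) :=
    fun x _ => mul_log_add_mul_log_one_sub_le (hpb x) (hpg x) (hD x)
  refine ⟨Finset.sum_le_sum hle, ?_⟩
  rw [Finset.sum_eq_sum_iff_of_le hle]
  simp only [Finset.mem_univ, forall_const,
    fun x => mul_log_add_mul_log_one_sub_eq_iff (hpb x) (hpg x) (hD x)]

theorem bgan_optimal_discriminator_finite {α : Type*} [Fintype α] [Nonempty α]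
    (pb pg : α → ℝ) (hpb : ∀ x, 0 < pb x) (hpg : ∀ x, 0 < pg x)
    (D : α → ℝ) (hD : ∀ x, D x ∈ Set.Ioo (0 : ℝ) 1) :
    (∑ x, (pb x * Real.log (D x) + pg x * Real.log (1 - D x))) ≤
      (∑ x, (pb x * Real.log (pb x / (pb x + pg x)) +
        pg x * Real.log (pg x / (pb x + pg x)))) ∧
    ((∑ x, (pb x * Real.log (D x) + pg x * Real.log (1 - D x))) =
      (∑ x, (pb x * Real.log (pb x / (pb x + pg x)) +
        pg x * Real.log (pg x / (pb x + pg x)))) ↔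
      ∀ x, D x = pb x / (pb x + pg x)) :=
  bgan_optimal_discriminator_finite_general pb pg hpb hpg D hD
end

section
/- If strictly positive pmfs p_{g_1},…,p_{g_n} on α satisfy the fixed-point equations p_{g_i}(x) = π_i·p_data_i(x) + Σ_{j=1}^n π_{ij}·p_{g_j}(x) for all i ∈ {1,…,n} and all x ∈ α (i.e., p_{g_i} = p_{b_i} for every i), then W(p_{g_1},…,p_{g_n}) = −n·log 4. -/
open Real Finset

/-- The brainstorming mixture distribution of agent `i`:
`p_{b_i}(x) = π_i · p_data_i(x) + Σ_j π_{ij} · p_{g_j}(x)` with `π_i = 1 − Σ_j π_{ij}`. -/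
noncomputable def brainMix {α : Type*} [Fintype α] {n : ℕ} (B : Fin n → Fin n → ℝ)
    (pdata pg : Fin n → α → ℝ) (i : Fin n) (x : α) : ℝ :=
  (1 - ∑ j, B i j) * pdata i x + ∑ j, B i j * pg j x

/-- The brainstorming value `W(p_{g_1},…,p_{g_n})`. -/
noncomputable def brainW {α : Type*} [Fintype α] {n : ℕ} (B : Fin n → Fin n → ℝ)
    (pdata pg : Fin n → α → ℝ) : ℝ :=
  ∑ i, ∑ x,
    (brainMix B pdata pg i x *
        Real.log (brainMix B pdata pg i x / (brainMix B pdata pg i x + pg i x)) +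
      pg i x * Real.log (pg i x / (brainMix B pdata pg i x + pg i x)))

theorem brainW_eq_of_fixedPoint {α : Type*} [Fintype α] [Nonempty α] (n : ℕ) (hn : 0 < n)
    (B : Fin n → Fin n → ℝ) (hB : ∀ i j, 0 ≤ B i j) (hrow : ∀ i, ∑ j, B i j < 1)
    (pdata : Fin n → α → ℝ) (hpd_pos : ∀ i x, 0 < pdata i x)
    (hpd_sum : ∀ i, ∑ x, pdata i x = 1)
    (pg : Fin n → α → ℝ) (hpg_pos : ∀ i x, 0 < pg i x)
    (hpg_sum : ∀ i, ∑ x, pg i x = 1)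
    (hfix : ∀ i x, pg i x = brainMix B pdata pg i x) :
    brainW B pdata pg = -(n : ℝ) * Real.log 4 := by
  unfold brainW
  have hterm : ∀ i : Fin n, ∀ x : α,
      (brainMix B pdata pg i x *
        Real.log (brainMix B pdata pg i x / (brainMix B pdata pg i x + pg i x)) +
      pg i x * Real.log (pg i x / (brainMix B pdata pg i x + pg i x)))
      = -Real.log 4 * pg i x := by
    intro i x
    rw [← hfix i x]
    have hp := (hpg_pos i x).ne'
    have h2 : pg i x + pg i x = 2 * pg i x := by ring
    rw [h2, div_mul_eq_div_div_swap, div_self hp]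
    rw [Real.log_div one_ne_zero two_ne_zero, Real.log_one]
    have : (4:ℝ) = 2^2 := by norm_num
    rw [this, Real.log_pow]
    ring
  have hsum : ∀ i : Fin n, ∑ x, (brainMix B pdata pg i x *
        Real.log (brainMix B pdata pg i x / (brainMix B pdata pg i x + pg i x)) +
      pg i x * Real.log (pg i x / (brainMix B pdata pg i x + pg i x))) = -Real.log 4 := by
    intro i
    simp_rw [hterm i, ← Finset.mul_sum, hpg_sum i, mul_one]
  simp_rw [hsum]
  simp [mul_comm]
end

section
/- If strictly positive pmfs p_{g_1},…,p_{g_n} on α satisfy W(p_{g_1},…,p_{g_n}) = −n·log 4, then p_{g_i}(x) = p_{b_i}(x) for every i ∈ {1,…,n} and every x ∈ α; that is, the minimum value of W is attained only at solutions of the fixed-point equations p_{g_i} = π_i·p_data_i + Σ_j π_{ij}·p_{g_j}. -/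
open Real Finset

lemma aux_ge (a b : ℝ) (ha : 0 < a) (hb : 0 < b) :
    a - b / 2 ≤ a * Real.log (2 * a / b) := by
  have h1 : Real.log (b / (2 * a)) ≤ b / (2 * a) - 1 :=
    Real.log_le_sub_one_of_pos (by positivity)
  have h2 : Real.log (2 * a / b) = -Real.log (b / (2 * a)) := by
    rw [← Real.log_inv, inv_div]
  have h3 : 1 - b / (2 * a) ≤ Real.log (2 * a / b) := by rw [h2]; linarith
  have h4 : a * (1 - b / (2 * a)) ≤ a * Real.log (2 * a / b) :=
    mul_le_mul_of_nonneg_left h3 ha.le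
  have h5 : a * (1 - b / (2 * a)) = a - b / 2 := by field_simp
  linarith

lemma aux_gt (a b : ℝ) (ha : 0 < a) (hb : 0 < b) (hne : 2 * a ≠ b) :
    a - b / 2 < a * Real.log (2 * a / b) := by
  have hne' : b / (2 * a) ≠ 1 := by
    intro h
    have : b = 2 * a := by field_simp at h; linarith
    exact hne this.symm
  have h1 : Real.log (b / (2 * a)) < b / (2 * a) - 1 :=
    Real.log_lt_sub_one_of_pos (by positivity) hne'
  have h2 : Real.log (2 * a / b) = -Real.log (b / (2 * a)) := by
    rw [← Real.log_inv, inv_div]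
  have h3 : 1 - b / (2 * a) < Real.log (2 * a / b) := by rw [h2]; linarith
  have h4 : a * (1 - b / (2 * a)) < a * Real.log (2 * a / b) :=
    (mul_lt_mul_iff_right₀ ha).mpr h3
  have h5 : a * (1 - b / (2 * a)) = a - b / 2 := by field_simp
  linarith

lemma key_expr (p q : ℝ) (hp : 0 < p) (hq : 0 < q) :
    p * Real.log (p / (p + q)) + q * Real.log (q / (p + q)) + (p + q) * Real.log 2
      = p * Real.log (2 * p / (p + q)) + q * Real.log (2 * q / (p + q)) := by
  have hs : 0 < p + q := by linarith
  have h1 : Real.log (2 * p / (p + q)) = Real.log (p / (p + q)) + Real.log 2 := by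
    rw [show 2 * p / (p + q) = p / (p + q) * 2 by ring,
      Real.log_mul (by positivity) two_ne_zero]
  have h2 : Real.log (2 * q / (p + q)) = Real.log (q / (p + q)) + Real.log 2 := by
    rw [show 2 * q / (p + q) = q / (p + q) * 2 by ring,
      Real.log_mul (by positivity) two_ne_zero]
  rw [h1, h2]; ring

lemma key_nonneg (p q : ℝ) (hp : 0 < p) (hq : 0 < q) :
    0 ≤ p * Real.log (p / (p + q)) + q * Real.log (q / (p + q)) + (p + q) * Real.log 2 := by
  rw [key_expr p q hp hq]
  have hs : 0 < p + q := by linarith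
  have h1 := aux_ge p (p + q) hp hs
  have h2 := aux_ge q (p + q) hq hs
  linarith

lemma key_eq (p q : ℝ) (hp : 0 < p) (hq : 0 < q)
    (h : p * Real.log (p / (p + q)) + q * Real.log (q / (p + q)) + (p + q) * Real.log 2 = 0) :
    q = p := by
  by_contra hne
  have hs : 0 < p + q := by linarith
  have h1 : p - (p + q) / 2 < p * Real.log (2 * p / (p + q)) := by
    apply aux_gt p (p + q) hp hs
    intro hc; apply hne; linarith
  have h2 := aux_ge q (p + q) hq hs
  rw [key_expr p q hp hq] at h
  linarith

theorem fixedPoint_of_brainW_eq {α : Type*} [Fintype α] [Nonempty α] (n : ℕ) (hn : 0 < n)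
    (B : Fin n → Fin n → ℝ) (hB : ∀ i j, 0 ≤ B i j) (hrow : ∀ i, ∑ j, B i j < 1)
    (pdata : Fin n → α → ℝ) (hpd_pos : ∀ i x, 0 < pdata i x)
    (hpd_sum : ∀ i, ∑ x, pdata i x = 1)
    (pg : Fin n → α → ℝ) (hpg_pos : ∀ i x, 0 < pg i x)
    (hpg_sum : ∀ i, ∑ x, pg i x = 1)
    (hmin : brainW B pdata pg = -(n : ℝ) * Real.log 4) :
    ∀ i x, pg i x = brainMix B pdata pg i x := by
  set pb := brainMix B pdata pg with hpb
  -- positivity of pb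
  have hb_pos : ∀ i x, 0 < pb i x := by
    intro i x
    have h1 : 0 < (1 - ∑ j, B i j) * pdata i x :=
      mul_pos (by linarith [hrow i]) (hpd_pos i x)
    have h2 : 0 ≤ ∑ j, B i j * pg j x :=
      Finset.sum_nonneg fun j _ => mul_nonneg (hB i j) (hpg_pos j x).le
    simp only [hpb, brainMix]; linarith
  -- pb sums to 1
  have hb_sum : ∀ i, ∑ x, pb i x = 1 := by
    intro i
    simp only [hpb, brainMix]
    rw [Finset.sum_add_distrib, ← Finset.mul_sum, hpd_sum, Finset.sum_comm]
    have : ∀ j : Fin n, ∑ x, B i j * pg j x = B i j := by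
      intro j; rw [← Finset.mul_sum, hpg_sum, mul_one]
    rw [Finset.sum_congr rfl fun j _ => this j]
    ring
  have hlog4 : Real.log 4 = 2 * Real.log 2 := by
    rw [show (4:ℝ) = 2 ^ 2 by norm_num, Real.log_pow]; push_cast; ring
  -- inner term
  set T : Fin n → α → ℝ := fun i x =>
    pb i x * Real.log (pb i x / (pb i x + pg i x)) +
      pg i x * Real.log (pg i x / (pb i x + pg i x)) with hT
  have hterm_nonneg : ∀ i x, 0 ≤ T i x + (pb i x + pg i x) * Real.log 2 := by
    intro i x
    have := key_nonneg (pb i x) (pg i x) (hb_pos i x) (hpg_pos i x)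
    simp only [hT]; linarith
  -- inner sums
  have hsumT : ∀ i, ∑ x, (T i x + (pb i x + pg i x) * Real.log 2)
      = (∑ x, T i x) + Real.log 4 := by
    intro i
    rw [Finset.sum_add_distrib]
    congr 1
    rw [← Finset.sum_mul, Finset.sum_add_distrib, hb_sum i, hpg_sum i, hlog4]; ring
  have hinner_nonneg : ∀ i, 0 ≤ (∑ x, T i x) + Real.log 4 := by
    intro i
    rw [← hsumT i]
    exact Finset.sum_nonneg fun x _ => hterm_nonneg i x
  -- total sum is zero
  have htot : ∑ i, ((∑ x, T i x) + Real.log 4) = 0 := by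
    rw [Finset.sum_add_distrib]
    have hW : ∑ i, ∑ x, T i x = -(n : ℝ) * Real.log 4 := hmin
    simp [hW, Finset.sum_const, Finset.card_univ]
  have hinner_eq : ∀ i : Fin n, (∑ x, T i x) + Real.log 4 = 0 := by
    intro i
    have := (Finset.sum_eq_zero_iff_of_nonneg
      (fun i _ => hinner_nonneg i)).mp htot i (Finset.mem_univ i)
    exact this
  intro i x
  have hsum0 : ∑ x, (T i x + (pb i x + pg i x) * Real.log 2) = 0 := by
    rw [hsumT i]; exact hinner_eq i
  have h0 : T i x + (pb i x + pg i x) * Real.log 2 = 0 :=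
    (Finset.sum_eq_zero_iff_of_nonneg (fun x _ => hterm_nonneg i x)).mp hsum0 x
      (Finset.mem_univ x)
  exact key_eq (pb i x) (pg i x) (hb_pos i x) (hpg_pos i x) (by simp only [hT] at h0; linarith)
end

section
/- There exists a unique family of functions q_1,…,q_n : α → ℝ satisfying the fixed-point equations q_i(x) = π_i·p_data_i(x) + Σ_{j=1}^n π_{ij}·q_j(x) for all i ∈ {1,…,n} and all x ∈ α. -/
/-! The equations say `(1 - B) q = C` column by column, with `C i x = π_i p_data_i(x)`. Since each
row of `B` has absolute sum below one, `1 - B` is strictly diagonally dominant, hence has nonzero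
determinant by Gershgorin, and `q = (1 - B)⁻¹ C` is the only solution. -/

namespace Matrix

variable {ι : Type*} [Fintype ι] [DecidableEq ι]

theorem existsUnique_mul_eq {R κ : Type*} [CommRing R] {A : Matrix ι ι R} (hA : IsUnit A.det)
    (C : Matrix ι κ R) : ∃! X : Matrix ι κ R, A * X = C :=
  ⟨A⁻¹ * C, A.mul_nonsing_inv_cancel_left C hA,
    fun X hX => hX ▸ (A.nonsing_inv_mul_cancel_left X hA).symm⟩

theorem existsUnique_eq_add_mul {R κ : Type*} [CommRing R] {B : Matrix ι ι R}
    (hB : IsUnit (1 - B).det) (C : Matrix ι κ R) : ∃! X : Matrix ι κ R, X = C + B * X := by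
  have hiff : ∀ X : Matrix ι κ R, X = C + B * X ↔ (1 - B) * X = C := fun X => by
    rw [Matrix.sub_mul, Matrix.one_mul, sub_eq_iff_eq_add', add_comm]
  simpa only [hiff] using existsUnique_mul_eq hB C

theorem det_one_sub_ne_zero_of_sum_norm_lt_one {K : Type*} [NormedField K] {B : Matrix ι ι K}
    (hB : ∀ i, ∑ j, ‖B i j‖ < 1) : (1 - B).det ≠ 0 := by
  refine det_ne_zero_of_sum_row_lt_diag fun k => ?_
  have hoff : ∑ j ∈ Finset.univ.erase k, ‖(1 - B) k j‖ = ∑ j ∈ Finset.univ.erase k, ‖B k j‖ :=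
    Finset.sum_congr rfl fun j hj => by
      rw [sub_apply, one_apply_ne' (Finset.ne_of_mem_erase hj), zero_sub, norm_neg]
  calc ∑ j ∈ Finset.univ.erase k, ‖(1 - B) k j‖
      = ∑ j, ‖B k j‖ - ‖B k k‖ := by
        rw [hoff, Finset.sum_erase_eq_sub (Finset.mem_univ k)]
    _ < 1 - ‖B k k‖ := by linarith [hB k]
    _ ≤ ‖(1 - B) k k‖ := by
        rw [sub_apply, one_apply_eq, ← norm_one (α := K)]
        exact norm_sub_norm_le _ _

end Matrix

theorem fixedPoint_exists_unique_general {α : Type*} (n : ℕ)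
    (B : Fin n → Fin n → ℝ) (hB : ∀ i j, 0 ≤ B i j) (hrow : ∀ i, ∑ j, B i j < 1)
    (pdata : Fin n → α → ℝ) :
    ∃! q : Fin n → α → ℝ,
      ∀ i x, q i x = (1 - ∑ j, B i j) * pdata i x + ∑ j, B i j * q j x := by
  have hnorm : ∀ i, ∑ j, ‖B i j‖ < 1 := fun i => by
    simpa only [Real.norm_of_nonneg (hB i _)] using hrow i
  have hdet : IsUnit (1 - Matrix.of B).det :=
    (Matrix.det_one_sub_ne_zero_of_sum_norm_lt_one hnorm).isUnit
  have h := Matrix.existsUnique_eq_add_mul hdet (Matrix.of fun i x => (1 - ∑ j, B i j) * pdata i x)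
  simp only [← Matrix.ext_iff, Matrix.add_apply, Matrix.mul_apply, Matrix.of_apply] at h
  exact h

theorem fixedPoint_exists_unique {α : Type*} [Fintype α] [Nonempty α] (n : ℕ) (hn : 0 < n)
    (B : Fin n → Fin n → ℝ) (hB : ∀ i j, 0 ≤ B i j) (hrow : ∀ i, ∑ j, B i j < 1)
    (pdata : Fin n → α → ℝ) (hpd_pos : ∀ i x, 0 < pdata i x)
    (hpd_sum : ∀ i, ∑ x, pdata i x = 1) :
    ∃! q : Fin n → α → ℝ,
      ∀ i x, q i x = (1 - ∑ j, B i j) * pdata i x + ∑ j, B i j * q j x :=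
  fixedPoint_exists_unique_general n B hB hrow pdata
end

section
/- Suppose the connection structure is strongly connected: for every pair of distinct indices i, j ∈ {1,…,n}, agent i reaches agent j through B. Then every entry of λ := (I − B)^{-1}·C is strictly positive: λ_{ij} > 0 for all i, j ∈ {1,…,n}. Consequently, the unique solution of (I−B)p_g = C·P_data gives each agent a generator distribution p*_{g_i} = Σ_j λ_{ij}·p_data_j that places strictly positive weight on every agent's data distribution. -/
/-!
Since the row sums of `B` are `< 1`, its `ℓ∞` operator norm is `< 1`, so `(I - B)⁻¹` is the
Neumann series `∑ₖ Bᵏ`. All terms are entrywise nonnegative, and a positive path from `i` to `j`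
of length `m` makes `(Bᵐ) i j` positive, hence `(I - B)⁻¹ i j > 0`. Multiplying on the right by
the positive diagonal `C` keeps every entry positive.
-/

/-- Agent `i` reaches agent `j` through `B`: either `i = j`, or there is a path
`k_0 = i, k_1, …, k_m = j` (with `m ≥ 1`) along which all the weights
`B (k_t) (k_{t+1}) = π_{k_t k_{t+1}}` are strictly positive. -/
def Reaches {n : ℕ} (B : Matrix (Fin n) (Fin n) ℝ) (i j : Fin n) : Prop :=
  i = j ∨ ∃ m : ℕ, 1 ≤ m ∧ ∃ k : Fin (m + 1) → Fin n, k 0 = i ∧ k (Fin.last m) = j ∧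
    ∀ t : Fin m, 0 < B (k t.castSucc) (k t.succ)

namespace Matrix

variable {ι : Type*} [Fintype ι] [DecidableEq ι]

theorem pow_apply_pos_of_path {R : Type*} [Semiring R] [PartialOrder R] [IsStrictOrderedRing R]
    {B : Matrix ι ι R} (hB : ∀ i j, 0 ≤ B i j) {m : ℕ} (k : Fin (m + 1) → ι)
    (hk : ∀ t : Fin m, 0 < B (k t.castSucc) (k t.succ)) :
    0 < (B ^ m) (k 0) (k (Fin.last m)) := by
  induction m with
  | zero => simp
  | succ m ih =>
    have hfirst : 0 < B (k 0) (k 1) := hk 0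
    have hrest : 0 < (B ^ m) (k 1) (k (Fin.last (m + 1))) := by
      simpa [Fin.succ_last] using ih (fun t => k t.succ) (fun t => hk t.succ)
    rw [pow_succ', mul_apply]
    exact Finset.sum_pos' (fun c _ => mul_nonneg (hB _ _) (pow_apply_nonneg hB _ _ _))
      ⟨k 1, Finset.mem_univ _, mul_pos hfirst hrest⟩

section LinftyOpNorm

attribute [local instance] Matrix.linftyOpNormedRing Matrix.linftyOpNormedAlgebra

theorem hasSum_geom_series_inv_one_sub {B : Matrix ι ι ℝ} (hB : ∀ i, ∑ j, |B i j| < 1) :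
    HasSum (fun k => B ^ k) (1 - B)⁻¹ := by
  have : CompleteSpace (Matrix ι ι ℝ) := FiniteDimensional.complete ℝ _
  have hnorm : ‖B‖ < 1 := by
    rw [linfty_opNorm_def, ← NNReal.coe_one, NNReal.coe_lt_coe, Finset.sup_lt_iff zero_lt_one]
    intro i _
    rw [← NNReal.coe_lt_coe]
    push_cast
    exact hB i
  rw [nonsing_inv_eq_ringInverse]
  exact hasSum_geom_series_inverse B hnorm

end LinftyOpNorm

theorem inv_one_sub_apply_pos_of_pow_apply_pos {B : Matrix ι ι ℝ} (hB : ∀ i j, 0 ≤ B i j)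
    (hrow : ∀ i, ∑ j, B i j < 1) {i j : ι} {m : ℕ} (hm : 0 < (B ^ m) i j) :
    0 < (1 - B)⁻¹ i j := by
  have hsum : HasSum (fun k => B ^ k) (1 - B)⁻¹ :=
    hasSum_geom_series_inv_one_sub fun i => by simpa only [abs_of_nonneg (hB i _)] using hrow i
  have hentry : HasSum (fun k => (B ^ k) i j) ((1 - B)⁻¹ i j) :=
    Pi.hasSum.mp (Pi.hasSum.mp hsum i) j
  exact hm.trans_le (le_hasSum hentry m fun k _ => pow_apply_nonneg hB k i j)

end Matrix

theorem Reaches.exists_pow_apply_pos {n : ℕ} {B : Matrix (Fin n) (Fin n) ℝ}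
    (hB : ∀ i j, 0 ≤ B i j) {i j : Fin n} (h : Reaches B i j) : ∃ m, 0 < (B ^ m) i j := by
  obtain rfl | ⟨m, -, k, rfl, rfl, hk⟩ := h
  · exact ⟨0, by simp⟩
  · exact ⟨m, Matrix.pow_apply_pos_of_path hB k hk⟩

theorem lambda_pos_of_strongly_connected_general (n : ℕ)
    (B : Matrix (Fin n) (Fin n) ℝ) (hB : ∀ i j, 0 ≤ B i j)
    (hrow : ∀ i, ∑ j, B i j < 1)
    (hsc : ∀ i j : Fin n, i ≠ j → Reaches B i j) :
    ∀ i j, 0 < ((1 - B)⁻¹ * Matrix.diagonal (fun i => 1 - ∑ j, B i j)) i j := by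
  intro i j
  have hreach : Reaches B i j := (eq_or_ne i j).elim Or.inl (hsc i j)
  obtain ⟨m, hm⟩ := hreach.exists_pow_apply_pos hB
  rw [Matrix.mul_diagonal]
  exact mul_pos (Matrix.inv_one_sub_apply_pos_of_pow_apply_pos hB hrow hm) (sub_pos.mpr (hrow j))

theorem lambda_pos_of_strongly_connected (n : ℕ) (hn : 0 < n)
    (B : Matrix (Fin n) (Fin n) ℝ) (hB : ∀ i j, 0 ≤ B i j)
    (hrow : ∀ i, ∑ j, B i j < 1)
    (hsc : ∀ i j : Fin n, i ≠ j → Reaches B i j) :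
    ∀ i j, 0 < ((1 - B)⁻¹ * Matrix.diagonal (fun i => 1 - ∑ j, B i j)) i j :=
  lambda_pos_of_strongly_connected_general n B hB hrow hsc
end

section
/- For indices i, j ∈ {1,…,n} with i ≠ j, if agent i does NOT reach agent j through B, then λ_{ij} = 0, where λ := (I − B)^{-1}·C; i.e., the equilibrium generator distribution of agent i places zero weight on the data distribution of any agent not reachable from i. -/
private lemma reaches_step {n : ℕ} (B : Matrix (Fin n) (Fin n) ℝ) {l k j : Fin n}
    (hlk : 0 < B l k) (hkj : Reaches B k j) : Reaches B l j := by
  rcases hkj with rfl | ⟨m, hm, p, hp0, hpl, hpos⟩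
  · exact Or.inr ⟨1, le_refl 1, ![l, k], by simp, by simp [Fin.last], by
      intro t; fin_cases t; simpa using hlk⟩
  · refine Or.inr ⟨m + 1, by omega, Fin.cons l p, Fin.cons_zero _ _, ?_, ?_⟩
    · rw [← Fin.succ_last, Fin.cons_succ]; exact hpl
    · intro t
      refine Fin.cases ?_ (fun s => ?_) t
      · simpa [Fin.cons_succ, hp0] using hlk
      · have h1 : Fin.castSucc s.succ = Fin.succ s.castSucc := by
          ext; simp
        rw [h1, Fin.cons_succ, Fin.cons_succ]
        exact hpos s

theorem lambda_eq_zero_of_not_reaches (n : ℕ) (hn : 0 < n)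
    (B : Matrix (Fin n) (Fin n) ℝ) (hB : ∀ i j, 0 ≤ B i j)
    (hrow : ∀ i, ∑ j, B i j < 1) (i j : Fin n) (hij : i ≠ j)
    (hnr : ¬ Reaches B i j) :
    ((1 - B)⁻¹ * Matrix.diagonal (fun i => 1 - ∑ j, B i j)) i j = 0 := by
  classical
  rw [Matrix.mul_diagonal]
  suffices h : (1 - B)⁻¹ i j = 0 by rw [h, zero_mul]
  by_cases hdet : IsUnit (1 - B).det
  · set A := (1 - B)⁻¹ with hA
    have hMA : (1 - B) * A = 1 := Matrix.mul_nonsing_inv _ hdet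
    set T : Finset (Fin n) := Finset.univ.filter (fun k => ¬ Reaches B k j) with hT
    have hiT : i ∈ T := by simp [hT, hnr]
    have hjj : Reaches B j j := Or.inl rfl
    -- key equation for l not reaching j
    have heq : ∀ l ∈ T, A l j = ∑ k, B l k * A k j := by
      intro l hl
      have hlj : l ≠ j := by
        intro h; rw [hT, Finset.mem_filter] at hl; exact hl.2 (h ▸ hjj)
      have h1 : ((1 - B) * A) l j = (1 : Matrix (Fin n) (Fin n) ℝ) l j := by rw [hMA]
      rw [Matrix.mul_apply, Matrix.one_apply_ne hlj] at h1
      have h2 : ∀ k, (1 - B) l k * A k j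
          = (if l = k then A k j else 0) - B l k * A k j := by
        intro k
        rw [Matrix.sub_apply, Matrix.one_apply, sub_mul]
        by_cases hk : l = k <;> simp [hk]
      rw [Finset.sum_congr rfl (fun k _ => h2 k), Finset.sum_sub_distrib,
        Finset.sum_ite_eq Finset.univ l (fun k => A k j)] at h1
      simp only [Finset.mem_univ, if_true] at h1
      linarith [h1]
    have hBz : ∀ l ∈ T, ∀ k, k ∉ T → B l k = 0 := by
      intro l hl k hk
      rw [hT, Finset.mem_filter] at hl hk
      by_contra h
      have hk' : Reaches B k j := by
        by_contra h'; exact hk ⟨Finset.mem_univ k, h'⟩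
      exact hl.2 (reaches_step B (lt_of_le_of_ne (hB l k) (Ne.symm h)) hk')
    obtain ⟨l₀, hl₀T, hmax⟩ := T.exists_max_image (fun k => |A k j|) ⟨i, hiT⟩
    set c := |A l₀ j| with hc
    have hc0 : c = 0 := by
      by_contra hcne
      have hcpos : 0 < c := lt_of_le_of_ne (abs_nonneg _) (Ne.symm hcne)
      have hb1 : |A l₀ j| ≤ ∑ k, B l₀ k * |A k j| := by
        rw [heq l₀ hl₀T]
        refine le_trans (Finset.abs_sum_le_sum_abs _ _) ?_
        refine Finset.sum_le_sum (fun k _ => ?_)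
        rw [abs_mul, abs_of_nonneg (hB l₀ k)]
      have hb2 : ∑ k, B l₀ k * |A k j| ≤ ∑ k, B l₀ k * c := by
        refine Finset.sum_le_sum (fun k _ => ?_)
        by_cases hk : k ∈ T
        · exact mul_le_mul_of_nonneg_left (hmax k hk) (hB l₀ k)
        · rw [hBz l₀ hl₀T k hk, zero_mul, zero_mul]
      have hb3 : ∑ k, B l₀ k * c = (∑ k, B l₀ k) * c := by
        rw [Finset.sum_mul]
      have : c < c := by
        calc c = |A l₀ j| := rfl
          _ ≤ ∑ k, B l₀ k * c := le_trans hb1 hb2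
          _ = (∑ k, B l₀ k) * c := hb3
          _ < 1 * c := mul_lt_mul_of_pos_right (hrow l₀) hcpos
          _ = c := one_mul c
      exact absurd this (lt_irrefl c)
    have : |A i j| ≤ 0 := hc0 ▸ hmax i hiT
    exact abs_eq_zero.mp (le_antisymm this (abs_nonneg _))
  · rw [Matrix.nonsing_inv_apply_not_isUnit _ hdet]
    simp
end

section
/- The unique family of functions q_1,…,q_n : α → ℝ satisfying q_i(x) = π_i·p_data_i(x) + Σ_{j=1}^n π_{ij}·q_j(x) for all i and x is given explicitly by q_i(x) = Σ_{j=1}^n λ_{ij}·p_data_j(x), where λ := (I − B)^{-1}·C. -/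
theorem fixedPoint_eq_lambda_mixture {α : Type*} [Fintype α] [Nonempty α]
    (n : ℕ) (hn : 0 < n)
    (B : Matrix (Fin n) (Fin n) ℝ) (hB : ∀ i j, 0 ≤ B i j)
    (hrow : ∀ i, ∑ j, B i j < 1)
    (pdata : Fin n → α → ℝ) (hpd_pos : ∀ i x, 0 < pdata i x)
    (hpd_sum : ∀ i, ∑ x, pdata i x = 1) :
    (∀ i x, (∑ j, ((1 - B)⁻¹ * Matrix.diagonal (fun i => 1 - ∑ j, B i j)) i j * pdata j x) =
        (1 - ∑ j, B i j) * pdata i x +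
          ∑ j, B i j *
            (∑ k, ((1 - B)⁻¹ * Matrix.diagonal (fun i => 1 - ∑ j, B i j)) j k * pdata k x)) ∧
    ∀ q : Fin n → α → ℝ,
      (∀ i x, q i x = (1 - ∑ j, B i j) * pdata i x + ∑ j, B i j * q j x) →
      ∀ i x, q i x =
        ∑ j, ((1 - B)⁻¹ * Matrix.diagonal (fun i => 1 - ∑ j, B i j)) i j * pdata j x := by
  set C : Matrix (Fin n) (Fin n) ℝ := Matrix.diagonal (fun i => 1 - ∑ j, B i j) with hC
  set A : Matrix (Fin n) (Fin n) ℝ := 1 - B with hA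
  have hdet : A.det ≠ 0 := by
    apply det_ne_zero_of_sum_row_lt_diag
    intro k
    have hdiagpos : 0 < A k k := by
      have hkk : B k k ≤ ∑ j, B k j :=
        Finset.single_le_sum (fun j _ => hB k j) (Finset.mem_univ k)
      have := hrow k
      simp only [hA, Matrix.sub_apply, Matrix.one_apply_eq]
      linarith
    have h1 : ∑ j ∈ Finset.univ.erase k, ‖A k j‖ = ∑ j ∈ Finset.univ.erase k, B k j := by
      apply Finset.sum_congr rfl
      intro j hj
      have hjk : k ≠ j := (Finset.ne_of_mem_erase hj).symm
      simp only [hA, Matrix.sub_apply, Matrix.one_apply_ne hjk, Real.norm_eq_abs]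
      rw [zero_sub, abs_neg, abs_of_nonneg (hB k j)]
    have h2 : ∑ j ∈ Finset.univ.erase k, B k j + B k k = ∑ j, B k j :=
      Finset.sum_erase_add _ _ (Finset.mem_univ k)
    have h3 : ‖A k k‖ = A k k := Real.norm_of_nonneg hdiagpos.le
    rw [h1, h3]
    have := hrow k
    simp only [hA, Matrix.sub_apply, Matrix.one_apply_eq]
    linarith
  have hU : IsUnit A.det := isUnit_iff_ne_zero.mpr hdet
  have hAL : A * (A⁻¹ * C) = C := by
    rw [← Matrix.mul_assoc, Matrix.mul_nonsing_inv A hU, Matrix.one_mul]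
  set L : Matrix (Fin n) (Fin n) ℝ := A⁻¹ * C with hL
  have hfix : L = C + B * L := by
    have h : L - B * L = C := by
      have : (1 - B) * L = C := by rw [← hA]; exact hAL
      rwa [sub_mul, Matrix.one_mul] at this
    exact (eq_add_of_sub_eq h)
  constructor
  · intro i x
    set p : Fin n → ℝ := fun j => pdata j x with hp
    have key : L.mulVec p = C.mulVec p + B.mulVec (L.mulVec p) := by
      rw [Matrix.mulVec_mulVec, ← Matrix.add_mulVec, ← hfix]
    have hkey := congrFun key i
    simp only [Pi.add_apply, hC, Matrix.mulVec_diagonal] at hkey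
    simpa [Matrix.mulVec, dotProduct, hp] using hkey
  · intro q hq i x
    set p : Fin n → ℝ := fun j => pdata j x with hp
    set v : Fin n → ℝ := fun j => q j x with hv
    have hAv : A.mulVec v = C.mulVec p := by
      funext i'
      have h := hq i' x
      have hl : A.mulVec v i' = v i' - ∑ j, B i' j * v j := by
        rw [hA, Matrix.sub_mulVec, Matrix.one_mulVec]
        simp [Matrix.mulVec, dotProduct]
      have hr : C.mulVec p i' = (1 - ∑ j, B i' j) * p i' := by
        simp [hC, Matrix.mulVec_diagonal]
      rw [hl, hr]
      simp only [hv, hp]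
      linarith
    have h2 : v = L.mulVec p := by
      have h3 := congrArg (fun w => A⁻¹.mulVec w) hAv
      simp only [Matrix.mulVec_mulVec] at h3
      rwa [Matrix.nonsing_inv_mul A hU, Matrix.one_mulVec] at h3
    have := congrFun h2 i
    simpa [Matrix.mulVec, dotProduct, hv, hp] using this
end

section
/- The unique family of functions q_1,…,q_n : α → ℝ satisfying q_i(x) = π_i·p_data_i(x) + Σ_{j=1}^n π_{ij}·q_j(x) for all i and x consists of strictly positive pmfs: for each i, q_i(x) > 0 for all x ∈ α and Σ_{x∈α} q_i(x) = 1. -/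
theorem fixedPoint_is_pos_pmf {α : Type*} [Fintype α] [Nonempty α]
    (n : ℕ) (hn : 0 < n)
    (B : Fin n → Fin n → ℝ) (hB : ∀ i j, 0 ≤ B i j) (hrow : ∀ i, ∑ j, B i j < 1)
    (pdata : Fin n → α → ℝ) (hpd_pos : ∀ i x, 0 < pdata i x)
    (hpd_sum : ∀ i, ∑ x, pdata i x = 1)
    (q : Fin n → α → ℝ)
    (hq : ∀ i x, q i x = (1 - ∑ j, B i j) * pdata i x + ∑ j, B i j * q j x) :
    ∀ i : Fin n, (∀ x, 0 < q i x) ∧ ∑ x, q i x = 1 := by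
  haveI : Nonempty (Fin n) := Fin.pos_iff_nonempty.mp hn
  have hBrow_nonneg : ∀ i, (0:ℝ) ≤ ∑ j, B i j := fun i =>
    Finset.sum_nonneg fun j _ => hB i j
  -- Positivity
  have hpos : ∀ x (i : Fin n), 0 < q i x := by
    intro x
    obtain ⟨i0, -, hmin⟩ := Finset.exists_min_image Finset.univ (fun i => q i x)
      ⟨Classical.arbitrary (Fin n), Finset.mem_univ _⟩
    have hmin' : ∀ j, q i0 x ≤ q j x := fun j => hmin j (Finset.mem_univ j)
    by_contra hcon
    push_neg at hcon
    obtain ⟨i1, h1⟩ := hcon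
    have hc : q i0 x ≤ 0 := le_trans (hmin' i1) h1
    set S := ∑ j, B i0 j with hS
    have hkey : (1 - S) * pdata i0 x + S * q i0 x ≤ q i0 x := by
      have heq := hq i0 x
      rw [← hS] at heq
      have h2 : S * q i0 x ≤ ∑ j, B i0 j * q j x := by
        rw [hS, Finset.sum_mul]
        exact Finset.sum_le_sum fun j _ => mul_le_mul_of_nonneg_left (hmin' j) (hB i0 j)
      linarith
    have h1S : 0 < 1 - S := by linarith [hrow i0]
    have hpd := hpd_pos i0 x
    nlinarith [hkey, mul_pos h1S hpd, mul_nonpos_of_nonneg_of_nonpos h1S.le hc]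
  -- Sums
  intro i
  refine ⟨fun x => hpos x i, ?_⟩
  set s : Fin n → ℝ := fun i => ∑ x, q i x with hs
  have hseq : ∀ i, s i - 1 = ∑ j, B i j * (s j - 1) := by
    intro i
    have : s i = (1 - ∑ j, B i j) * 1 + ∑ j, B i j * s j := by
      calc s i = ∑ x, ((1 - ∑ j, B i j) * pdata i x + ∑ j, B i j * q j x) :=
            Finset.sum_congr rfl fun x _ => hq i x
        _ = (1 - ∑ j, B i j) * (∑ x, pdata i x) + ∑ x, ∑ j, B i j * q j x := by
            rw [Finset.sum_add_distrib, Finset.mul_sum]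
        _ = (1 - ∑ j, B i j) * 1 + ∑ j, B i j * s j := by
            rw [hpd_sum i, Finset.sum_comm]
            congr 1
            exact Finset.sum_congr rfl fun j _ => (Finset.mul_sum _ _ _).symm
    have hsplit : ∑ j, B i j * (s j - 1) = (∑ j, B i j * s j) - ∑ j, B i j := by
      rw [← Finset.sum_sub_distrib]
      exact Finset.sum_congr rfl fun j _ => by ring
    rw [hsplit]; linarith [this]
  obtain ⟨i0, -, hmax⟩ := Finset.exists_max_image Finset.univ (fun i => |s i - 1|)
    ⟨Classical.arbitrary (Fin n), Finset.mem_univ _⟩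
  have hmax' : ∀ j, |s j - 1| ≤ |s i0 - 1| := fun j => hmax j (Finset.mem_univ j)
  set M := |s i0 - 1| with hM
  have hMle : M ≤ (∑ j, B i0 j) * M := by
    calc M = |∑ j, B i0 j * (s j - 1)| := by rw [hM, hseq i0]
    _ ≤ ∑ j, |B i0 j * (s j - 1)| := Finset.abs_sum_le_sum_abs _ _
    _ ≤ ∑ j, B i0 j * M := by
        refine Finset.sum_le_sum fun j _ => ?_
        rw [abs_mul, abs_of_nonneg (hB i0 j)]
        exact mul_le_mul_of_nonneg_left (hmax' j) (hB i0 j)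
    _ = (∑ j, B i0 j) * M := (Finset.sum_mul _ _ _).symm
  have hM0 : M = 0 := by
    by_contra h
    have hMpos : 0 < M := lt_of_le_of_ne (abs_nonneg _) (Ne.symm h)
    nlinarith [hrow i0]
  have : |s i - 1| = 0 := le_antisymm (hM0 ▸ hmax' i) (abs_nonneg _)
  have := abs_eq_zero.mp this
  simpa [hs] using sub_eq_zero.mp this
end

section
/- Let q_1,…,q_n be the unique family of strictly positive pmfs on α satisfying q_i(x) = π_i·p_data_i(x) + Σ_{j=1}^n π_{ij}·q_j(x) for all i and x. Then q = (q_1,…,q_n) is the unique global minimizer of W over all families of strictly positive pmfs on α: W(q_1,…,q_n) = −n·log 4, and for every family of strictly positive pmfs (p_{g_1},…,p_{g_n}) ≠ (q_1,…,q_n), W(p_{g_1},…,p_{g_n}) > −n·log 4. -/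
open Real Finset

lemma log_ineq_strict {a b : ℝ} (ha : 0 < a) (hb : 0 < b) (hne : a ≠ b) :
    -((a + b) * Real.log 2) < a * Real.log (a / (a + b)) + b * Real.log (b / (a + b)) := by
  have hab : 0 < a + b := by linarith
  have h := Real.strictConvexOn_mul_log.2 (Set.mem_Ici.2 ha.le) (Set.mem_Ici.2 hb.le) hne
      (by norm_num : (0:ℝ) < 1/2) (by norm_num : (0:ℝ) < 1/2) (by norm_num)
  simp only [smul_eq_mul] at h
  have hmid : ((a+b)/2) * Real.log ((a+b)/2) < (a * Real.log a + b * Real.log b) / 2 := by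
    have : (1:ℝ)/2 * a + 1/2 * b = (a+b)/2 := by ring
    rw [this] at h; linarith
  rw [Real.log_div hab.ne' two_ne_zero] at hmid
  rw [Real.log_div ha.ne' hab.ne', Real.log_div hb.ne' hab.ne']
  nlinarith [hmid]

lemma log_ineq {a b : ℝ} (ha : 0 < a) (hb : 0 < b) :
    -((a + b) * Real.log 2) ≤ a * Real.log (a / (a + b)) + b * Real.log (b / (a + b)) := by
  rcases eq_or_ne a b with rfl | hne
  · have h2 : a + a = 2 * a := by ring
    rw [h2]
    have : a / (2 * a) = 1/2 := by
      rw [div_eq_div_iff (by positivity) (by norm_num)]; ring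
    rw [this, one_div, Real.log_inv]
    exact le_of_eq (by ring)
  · exact (log_ineq_strict ha hb hne).le

lemma log_four : Real.log 4 = 2 * Real.log 2 := by
  rw [show (4:ℝ) = 2^2 by norm_num, Real.log_pow]; push_cast; ring

theorem brainW_unique_global_min {α : Type*} [Fintype α] [Nonempty α] (n : ℕ) (hn : 0 < n)
    (B : Fin n → Fin n → ℝ) (hB : ∀ i j, 0 ≤ B i j) (hrow : ∀ i, ∑ j, B i j < 1)
    (pdata : Fin n → α → ℝ) (hpd_pos : ∀ i x, 0 < pdata i x)
    (hpd_sum : ∀ i, ∑ x, pdata i x = 1)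
    (q : Fin n → α → ℝ) (hq_pos : ∀ i x, 0 < q i x) (hq_sum : ∀ i, ∑ x, q i x = 1)
    (hq_fix : ∀ i x, q i x = (1 - ∑ j, B i j) * pdata i x + ∑ j, B i j * q j x) :
    brainW B pdata q = -(n : ℝ) * Real.log 4 ∧
    ∀ pg : Fin n → α → ℝ, (∀ i x, 0 < pg i x) → (∀ i, ∑ x, pg i x = 1) →
      pg ≠ q → -(n : ℝ) * Real.log 4 < brainW B pdata pg := by
  -- general facts about the mixture
  have hmixpos : ∀ (pg : Fin n → α → ℝ), (∀ i x, 0 < pg i x) →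
      ∀ i x, 0 < brainMix B pdata pg i x := by
    intro pg hpos i x
    unfold brainMix
    have h1 : 0 < (1 - ∑ j, B i j) * pdata i x :=
      mul_pos (by linarith [hrow i]) (hpd_pos i x)
    have h2 : 0 ≤ ∑ j, B i j * pg j x :=
      Finset.sum_nonneg fun j _ => mul_nonneg (hB i j) (hpos j x).le
    linarith
  have hmixsum : ∀ (pg : Fin n → α → ℝ), (∀ i, ∑ x, pg i x = 1) →
      ∀ i, ∑ x, brainMix B pdata pg i x = 1 := by
    intro pg hsum i
    unfold brainMix
    rw [Finset.sum_add_distrib, ← Finset.mul_sum, hpd_sum i, mul_one]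
    rw [Finset.sum_comm]
    have : ∀ j ∈ (univ : Finset (Fin n)), ∑ x, B i j * pg j x = B i j := by
      intro j _; rw [← Finset.mul_sum, hsum j, mul_one]
    rw [Finset.sum_congr rfl this]
    ring
  constructor
  · -- value at q
    have hmix : ∀ i x, brainMix B pdata q i x = q i x := fun i x => (hq_fix i x).symm
    unfold brainW
    have hin : ∀ i, ∑ x, (brainMix B pdata q i x *
        Real.log (brainMix B pdata q i x / (brainMix B pdata q i x + q i x)) +
        q i x * Real.log (q i x / (brainMix B pdata q i x + q i x))) = -Real.log 4 := by
      intro i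
      have : ∀ x ∈ (univ : Finset α), (brainMix B pdata q i x *
          Real.log (brainMix B pdata q i x / (brainMix B pdata q i x + q i x)) +
          q i x * Real.log (q i x / (brainMix B pdata q i x + q i x)))
          = q i x * (-Real.log 4) := by
        intro x _
        rw [hmix i x]
        have hd : q i x / (q i x + q i x) = 1/2 := by
          rw [div_eq_div_iff (by have := hq_pos i x; positivity) (by norm_num)]; ring
        rw [hd, one_div, Real.log_inv, log_four]
        ring
      rw [Finset.sum_congr rfl this, ← Finset.sum_mul, hq_sum i, one_mul]
    rw [Finset.sum_congr rfl fun i _ => hin i, Finset.sum_const, card_univ,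
      Fintype.card_fin]
    simp [mul_comm]
  · -- strict minimality
    intro pg hpos hsum hne
    -- pg is not a fixed point
    have hex : ∃ i x, brainMix B pdata pg i x ≠ pg i x := by
      by_contra hcon
      push_neg at hcon
      apply hne
      funext i x
      -- uniqueness of fixed point
      set d : Fin n → ℝ := fun i => pg i x - q i x with hd
      have hfix : ∀ i, d i = ∑ j, B i j * d j := by
        intro i
        have h1 : pg i x = (1 - ∑ j, B i j) * pdata i x + ∑ j, B i j * pg j x :=
          (hcon i x).symm
        have h2 := hq_fix i x
        simp only [hd, mul_sub]
        rw [Finset.sum_sub_distrib]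
        linarith [h1, h2]
      have hzero : ∀ i, d i = 0 := by
        obtain ⟨i0, _, hmax⟩ := Finset.exists_max_image (univ : Finset (Fin n))
          (fun i => |d i|) ⟨⟨0, hn⟩, mem_univ _⟩
        have hle : |d i0| ≤ (∑ j, B i0 j) * |d i0| := by
          calc |d i0| = |∑ j, B i0 j * d j| := by rw [← hfix i0]
            _ ≤ ∑ j, |B i0 j * d j| := Finset.abs_sum_le_sum_abs _ _
            _ ≤ ∑ j, B i0 j * |d i0| := by
                apply Finset.sum_le_sum
                intro j _
                rw [abs_mul, abs_of_nonneg (hB i0 j)]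
                exact mul_le_mul_of_nonneg_left (hmax j (mem_univ j)) (hB i0 j)
            _ = (∑ j, B i0 j) * |d i0| := by rw [Finset.sum_mul]
        have h0 : |d i0| ≤ 0 := by nlinarith [abs_nonneg (d i0), hrow i0]
        intro i
        have := hmax i (mem_univ i)
        have : |d i| ≤ 0 := le_trans this h0
        exact abs_eq_zero.mp (le_antisymm this (abs_nonneg _))
      have := hzero i
      simp only [hd] at this
      linarith
    obtain ⟨i0, x0, hne0⟩ := hex
    -- pointwise lower bounds
    have hterm : ∀ i x, -((brainMix B pdata pg i x + pg i x) * Real.log 2) ≤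
        (brainMix B pdata pg i x *
          Real.log (brainMix B pdata pg i x / (brainMix B pdata pg i x + pg i x)) +
          pg i x * Real.log (pg i x / (brainMix B pdata pg i x + pg i x))) :=
      fun i x => log_ineq (hmixpos pg hpos i x) (hpos i x)
    have hlowsum : ∀ i, ∑ x, -((brainMix B pdata pg i x + pg i x) * Real.log 2)
        = -Real.log 4 := by
      intro i
      rw [Finset.sum_neg_distrib]
      have : ∑ x, (brainMix B pdata pg i x + pg i x) * Real.log 2
          = 2 * Real.log 2 := by
        rw [← Finset.sum_mul, Finset.sum_add_distrib, hmixsum pg hsum i, hsum i]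
        ring
      rw [this, log_four]
    have hinner : ∀ i, -Real.log 4 ≤ ∑ x, (brainMix B pdata pg i x *
        Real.log (brainMix B pdata pg i x / (brainMix B pdata pg i x + pg i x)) +
        pg i x * Real.log (pg i x / (brainMix B pdata pg i x + pg i x))) := by
      intro i
      rw [← hlowsum i]
      exact Finset.sum_le_sum fun x _ => hterm i x
    have hstrict : -Real.log 4 < ∑ x, (brainMix B pdata pg i0 x *
        Real.log (brainMix B pdata pg i0 x / (brainMix B pdata pg i0 x + pg i0 x)) +
        pg i0 x * Real.log (pg i0 x / (brainMix B pdata pg i0 x + pg i0 x))) := by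
      rw [← hlowsum i0]
      exact Finset.sum_lt_sum (fun x _ => hterm i0 x)
        ⟨x0, mem_univ x0, log_ineq_strict (hmixpos pg hpos i0 x0) (hpos i0 x0) hne0⟩
    unfold brainW
    calc -(n : ℝ) * Real.log 4 = ∑ _i : Fin n, -Real.log 4 := by
          rw [Finset.sum_const, card_univ, Fintype.card_fin]; ring
      _ < _ := Finset.sum_lt_sum (fun i _ => hinner i) ⟨i0, mem_univ i0, hstrict⟩
end
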